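/- arXiv:0911.0513 — 3 statements merged into one kernel-verified Lean document; each statement's English description precedes it below -/
import Mathlib

section
/- Let $q$ be a power of an odd prime and $r \ge 1$ an integer. If $A \subseteq \mathbb{F}_q^r$ is a progression-free set of density $\alpha := q^{-r}|A|$, then there exist an element $g \in \mathbb{F}_q^r$ and a linear subspace $V < \mathbb{F}_q^r$ of codimension $1$ such that the density of $A$ on the affine subspace $g + V$ satisfies $|A \cap (g+V)|/|V| \ge (\alpha - q^{-r})/(1-\alpha)$. -/
/-!
Meshulam's density increment. Put `S u = ∑_{a ∈ A} ψ (u ⬝ᵥ a)` for a nontrivial character `ψ`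
of `F` and `N = q ^ r`, `T = |A|`. Since `A` contains only trivial progressions,
`∑_u S u ^ 2 S (-2u) = N T`; the frequency `u = 0` contributes `T ^ 3`, so by Parseval
(`∑_u ‖S u‖ ^ 2 = N T`) some `u ≠ 0` has `‖S u‖ (N - T) ≥ T ^ 2 - N`. Splitting `A` along the
level sets of `x ↦ u ⬝ᵥ x`, which are the cosets of the hyperplane `ker (u ⬝ᵥ ·)`, a large
`‖S u‖` forces some level set to contain at least `(‖S u‖ + T) / q` points of `A`.
-/

/-- A set is progression-free if `a + c = 2b` with `a,b,c ∈ A` forces `a = c`. -/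
def ProgressionFree {G : Type*} [AddCommGroup G] (A : Set G) : Prop :=
  ∀ a ∈ A, ∀ b ∈ A, ∀ c ∈ A, a + c = b + b → a = c

open Finset Function

section Doubling

variable {G : Type*} [AddCommGroup G]

theorem add_self_injective_of_two_ne_zero {F : Type*} [DivisionRing F] [Module F G]
    (h2 : (2 : F) ≠ 0) : Injective fun x : G => x + x := by
  intro x y h
  simpa only [← two_smul F, smul_right_inj h2] using h

theorem ProgressionFree.add_eq_add_self_iff {A : Set G} (hA : ProgressionFree A)
    (h2 : Injective fun x : G => x + x) {a b c : G} (ha : a ∈ A) (hb : b ∈ A) (hc : c ∈ A) :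
    b + c = a + a ↔ b = a ∧ c = a := by
  refine ⟨fun h => ?_, fun ⟨hba, hca⟩ => by rw [hba, hca]⟩
  obtain rfl := hA b hb a ha c hc h
  exact ⟨h2 h, h2 h⟩

theorem ProgressionFree.ne_univ [Nontrivial G] (h2 : Injective fun x : G => x + x) {A : Set G}
    (hA : ProgressionFree A) : A ≠ Set.univ := by
  rintro rfl
  obtain ⟨x, hx⟩ := exists_ne (0 : G)
  have h0 : 0 = x + x := hA 0 trivial x trivial (x + x) trivial (zero_add _)
  exact hx (h2 (by simpa using h0.symm))

end Doubling

theorem AddChar.norm_sum_mul_add_sum_le {G : Type*} [AddCommGroup G] [Fintype G]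
    {ψ : AddChar G ℂ} (hψ : ψ ≠ 1) {w : G → ℝ} {M : ℝ} (hw : ∀ t, w t ≤ M) :
    ‖∑ t, (w t : ℂ) * ψ t‖ + ∑ t, w t ≤ Fintype.card G * M := by
  set z := ∑ t, (w t : ℂ) * ψ t
  rcases eq_or_ne z 0 with hz | hz
  · simpa [hz] using Finset.sum_le_sum fun t (_ : t ∈ univ) => hw t
  -- `‖z‖ + Re (conj z * ψ t) ≥ 0`, so bounding each `w t` by `M` and summing kills the character.
  have hweight : ∀ t, 0 ≤ ‖z‖ + ((starRingEnd ℂ) z * ψ t).re := fun t => by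
    have := Complex.abs_re_le_norm ((starRingEnd ℂ) z * ψ t)
    rw [norm_mul, Complex.norm_conj, ψ.norm_apply, mul_one] at this
    linarith [neg_abs_le ((starRingEnd ℂ) z * ψ t).re]
  have hexpand : ∀ v : G → ℝ, ∑ t, v t * (‖z‖ + ((starRingEnd ℂ) z * ψ t).re) =
      ‖z‖ * ∑ t, v t + ((starRingEnd ℂ) z * ∑ t, (v t : ℂ) * ψ t).re := fun v => by
    simp only [mul_add, sum_add_distrib, mul_sum, Complex.re_sum]
    congr 1
    · exact sum_congr rfl fun t _ => mul_comm _ _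
    · exact sum_congr rfl fun t _ => by rw [mul_left_comm, Complex.re_ofReal_mul]
  have key : ‖z‖ * (‖z‖ + ∑ t, w t) ≤ ‖z‖ * (Fintype.card G * M) := calc
    ‖z‖ * (‖z‖ + ∑ t, w t) = ∑ t, w t * (‖z‖ + ((starRingEnd ℂ) z * ψ t).re) := by
      rw [hexpand, Complex.conj_mul', ← Complex.ofReal_pow, Complex.ofReal_re]; ring
    _ ≤ ∑ t, M * (‖z‖ + ((starRingEnd ℂ) z * ψ t).re) :=
      sum_le_sum fun t _ => mul_le_mul_of_nonneg_right (hw t) (hweight t)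
    _ = ‖z‖ * (Fintype.card G * M) := by
      rw [hexpand fun _ => M]
      simp [← mul_sum, AddChar.sum_eq_zero_of_ne_one hψ]
  exact le_of_mul_le_mul_left key (norm_pos_iff.2 hz)

theorem dotProduct_right_surjective {F ι : Type*} [Field F] [Fintype ι] [DecidableEq ι]
    {x : ι → F} (hx : x ≠ 0) : Surjective (x ⬝ᵥ ·) :=
  LinearMap.surjective_iff_ne_zero.2 ((LinearEquiv.map_ne_zero_iff (dotProductEquiv F ι)).2 hx)

section Fourier

variable {F ι : Type*} [Field F] [Fintype F] [DecidableEq F] [Fintype ι] {ψ : AddChar F ℂ}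

theorem sum_addChar_dotProduct [DecidableEq ι] (hψ : ψ ≠ 1) (x : ι → F) :
    ∑ u, ψ (u ⬝ᵥ x) = if x = 0 then (Fintype.card (ι → F) : ℂ) else 0 := by
  split_ifs with hx
  · simp [hx]
  obtain ⟨t, ht⟩ := AddChar.ne_one_iff.1 hψ
  obtain ⟨v, rfl⟩ := dotProduct_right_surjective hx t
  -- translating the summation variable by `v` multiplies the sum by `ψ (x ⬝ᵥ v) ≠ 1`
  refine eq_zero_of_mul_eq_self_left ht ?_
  rw [mul_sum]
  exact Fintype.sum_equiv (Equiv.addLeft v) _ _ fun u => by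
    simp [dotProduct_comm, dotProduct_add, AddChar.map_add_eq_mul]

variable (ψ) in
def fourierSum (A : Finset (ι → F)) (u : ι → F) : ℂ := ∑ a ∈ A, ψ (u ⬝ᵥ a)

theorem sum_norm_fourierSum_sq [DecidableEq ι] (hψ : ψ ≠ 1) (A : Finset (ι → F)) :
    ∑ u, ‖fourierSum ψ A u‖ ^ 2 = Fintype.card (ι → F) * #A := by
  have hexpand : ∀ u, ((‖fourierSum ψ A u‖ ^ 2 : ℝ) : ℂ) = ∑ a ∈ A, ∑ b ∈ A, ψ (u ⬝ᵥ (a - b)) :=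
    fun u => by
      rw [Complex.ofReal_pow, ← Complex.mul_conj', fourierSum, map_sum, sum_mul_sum]
      simp only [← AddChar.map_neg_eq_conj, ← AddChar.map_add_eq_mul, dotProduct_add,
        dotProduct_neg, sub_eq_add_neg]
  apply Complex.ofReal_injective
  rw [Complex.ofReal_sum, sum_congr rfl fun u _ => hexpand u, sum_comm]
  simp_rw [sum_comm (s := univ), sum_addChar_dotProduct hψ, sub_eq_zero, sum_ite_eq]
  simp [mul_comm]

theorem ProgressionFree.sum_fourierSum_sq_mul [DecidableEq ι] (h2 : (2 : F) ≠ 0) (hψ : ψ ≠ 1)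
    {A : Finset (ι → F)} (hA : ProgressionFree (A : Set (ι → F))) :
    ∑ u, fourierSum ψ A u ^ 2 * fourierSum ψ A (-(u + u)) = Fintype.card (ι → F) * #A := by
  have hexpand : ∀ u, fourierSum ψ A u ^ 2 * fourierSum ψ A (-(u + u)) =
      ∑ a ∈ A, ∑ c ∈ A, ∑ b ∈ A, ψ (u ⬝ᵥ (b + c - (a + a))) := fun u => by
    simp only [fourierSum, sq, sum_mul, mul_sum, ← AddChar.map_add_eq_mul]
    refine sum_congr rfl fun a _ => sum_congr rfl fun c _ => sum_congr rfl fun b _ => ?_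
    simp only [dotProduct_add, dotProduct_sub, neg_dotProduct, add_dotProduct]
    ring_nf
  have hdouble := add_self_injective_of_two_ne_zero (G := ι → F) h2
  simp_rw [hexpand]
  rw [sum_comm]
  simp_rw [sum_comm (s := univ), sum_addChar_dotProduct hψ]
  calc ∑ a ∈ A, ∑ c ∈ A, ∑ b ∈ A, (if b + c - (a + a) = 0 then (Fintype.card (ι → F) : ℂ) else 0)
      = ∑ a ∈ A, ∑ c ∈ A, ∑ b ∈ A, if b = a ∧ c = a then (Fintype.card (ι → F) : ℂ) else 0 :=
        sum_congr rfl fun a ha => sum_congr rfl fun c hc => sum_congr rfl fun b hb => if_congr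
          (by rw [sub_eq_zero, hA.add_eq_add_self_iff hdouble ha hb hc]) rfl rfl
    _ = Fintype.card (ι → F) * #A := by simp [ite_and, mul_comm]

theorem ProgressionFree.exists_norm_fourierSum_ge [DecidableEq ι] [Nonempty ι] (h2 : (2 : F) ≠ 0)
    (hψ : ψ ≠ 1) {A : Finset (ι → F)} (hA : ProgressionFree (A : Set (ι → F))) :
    ∃ u ≠ 0, (#A : ℝ) ^ 2 - Fintype.card (ι → F) ≤
      ‖fourierSum ψ A u‖ * (Fintype.card (ι → F) - #A) := by
  set N : ℝ := (Fintype.card (ι → F) : ℝ)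
  set T : ℝ := (#A : ℝ)
  set S := fourierSum ψ A
  have hS0 : S 0 = #A := by simp [S, fourierSum]
  obtain ⟨u, hu, hmax⟩ := exists_max_image (univ.erase (0 : ι → F)) (‖S ·‖)
    univ_nontrivial.erase_nonempty
  refine ⟨u, (mem_erase.1 hu).1, ?_⟩
  -- the nonzero frequencies contribute `N T - T ^ 3` to the progression count, and at most
  -- `‖S u‖ (N T - T ^ 2)` by Parseval
  have hcount : T ^ 3 - N * T ≤ ‖S u‖ * (N * T - T ^ 2) := calc
    T ^ 3 - N * T ≤ ‖∑ v ∈ univ.erase 0, S v ^ 2 * S (-(v + v))‖ := by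
      rw [sum_erase_eq_sub (mem_univ _), hA.sum_fourierSum_sq_mul h2 hψ, add_zero, neg_zero, hS0,
        show (Fintype.card (ι → F) : ℂ) * #A - #A ^ 2 * #A = ((N * T - T ^ 3 : ℝ) : ℂ) by
          push_cast [N, T]; ring, Complex.norm_real, Real.norm_eq_abs]
      linarith [neg_le_abs (N * T - T ^ 3)]
    _ ≤ ∑ v ∈ univ.erase 0, ‖S v‖ ^ 2 * ‖S u‖ := by
      refine (norm_sum_le _ _).trans (sum_le_sum fun v hv => ?_)
      rw [norm_mul, norm_pow]
      refine mul_le_mul_of_nonneg_left (hmax _ ?_) (by positivity)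
      refine mem_erase.2 ⟨fun hv0 => (mem_erase.1 hv).1 ?_, mem_univ _⟩
      exact add_self_injective_of_two_ne_zero h2 (by simpa using neg_eq_zero.1 hv0)
    _ = ‖S u‖ * (N * T - T ^ 2) := by
      rw [← sum_mul, sum_erase_eq_sub (mem_univ _), sum_norm_fourierSum_sq hψ, hS0,
        Complex.norm_natCast]
      ring
  have hN : 0 ≤ N := by positivity
  rcases (show 0 ≤ T by positivity).eq_or_lt with hT | hT
  · rw [← hT]; nlinarith [norm_nonneg (S u)]
  · nlinarith

theorem exists_norm_fourierSum_add_card_le (hψ : ψ ≠ 1) (A : Finset (ι → F)) (u : ι → F) :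
    ∃ t, ‖fourierSum ψ A u‖ + #A ≤ Fintype.card F * #{a ∈ A | u ⬝ᵥ a = t} := by
  set m : F → ℕ := fun t => #{a ∈ A | u ⬝ᵥ a = t}
  obtain ⟨t, -, hmax⟩ := exists_max_image univ m univ_nonempty
  have hfibre : fourierSum ψ A u = ∑ s, ((m s : ℝ) : ℂ) * ψ s := by
    rw [fourierSum, ← sum_fiberwise A (u ⬝ᵥ ·)]
    refine sum_congr rfl fun s _ => ?_
    rw [sum_congr rfl fun a ha => congrArg ψ (mem_filter.1 ha).2, sum_const, nsmul_eq_mul]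
    simp [m]
  have hcard : (#A : ℝ) = ∑ s, (m s : ℝ) := by
    exact_mod_cast card_eq_sum_card_fiberwise fun a _ => mem_univ (u ⬝ᵥ a)
  refine ⟨t, ?_⟩
  rw [hfibre, hcard]
  exact AddChar.norm_sum_mul_add_sum_le hψ fun s => by exact_mod_cast hmax s (mem_univ s)

end Fourier

namespace Module.Dual

variable {K M : Type*} [Field K] [AddCommGroup M] [Module K M] {f : Module.Dual K M}

theorem finrank_quotient_ker (hf : f ≠ 0) : finrank K (M ⧸ LinearMap.ker f) = 1 := by
  rw [(f.quotKerEquivOfSurjective (LinearMap.surjective_iff_ne_zero.2 hf)).finrank_eq,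
    finrank_self]

theorem card_eq_card_mul_card_ker (hf : f ≠ 0) :
    Nat.card M = Nat.card K * Nat.card (LinearMap.ker f) := by
  rw [(LinearMap.ker f).card_eq_card_quotient_mul_card, mul_comm,
    Nat.card_congr (f.quotKerEquivOfSurjective (LinearMap.surjective_iff_ne_zero.2 hf)).toEquiv]

end Module.Dual

theorem LinearMap.image_add_ker {R M N : Type*} [Ring R] [AddCommGroup M] [AddCommGroup N]
    [Module R M] [Module R N] (f : M →ₗ[R] N) (g : M) :
    (g + ·) '' (LinearMap.ker f : Set M) = f ⁻¹' {f g} := by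
  ext x
  refine ⟨?_, fun hx => ⟨x - g, by simp_all, add_sub_cancel _ _⟩⟩
  rintro ⟨v, hv, rfl⟩
  simp_all

theorem FiniteField.two_ne_zero_of_odd_card {F : Type*} [Field F] [Fintype F]
    (h : Odd (Fintype.card F)) : (2 : F) ≠ 0 :=
  Ring.two_ne_zero fun h2 => by
    simpa [Nat.odd_iff.1 h] using FiniteField.even_card_of_char_two h2

theorem AddChar.exists_ne_one (F : Type*) [Field F] [Finite F] : ∃ ψ : AddChar F ℂ, ψ ≠ 1 := by
  obtain ⟨ψ, hψ⟩ := AddChar.exists_apply_ne_zero.2 (one_ne_zero (α := F))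
  exact ⟨ψ, fun h => hψ (by simp [h])⟩

theorem density_increment_inequality {N T c q M k : ℝ} (hq : 0 < q) (hk : 0 < k) (hN : N = q * k)
    (hT : T < N) (hspec : T ^ 2 - N ≤ c * (N - T)) (hpig : c + T ≤ q * M) :
    (N⁻¹ * T - N⁻¹) / (1 - N⁻¹ * T) ≤ M / k := by
  have hNT : 0 < N - T := sub_pos.2 hT
  have hN0 : 0 < N := hN ▸ mul_pos hq hk
  rw [show (N⁻¹ * T - N⁻¹) / (1 - N⁻¹ * T) = (T - 1) / (N - T) by field_simp,
    div_le_div_iff₀ hNT hk]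
  -- `N (T - 1) = (T ^ 2 - N) + T (N - T) ≤ (c + T) (N - T) ≤ q M (N - T)`
  refine le_of_mul_le_mul_left ?_ hq
  nlinarith [mul_le_mul_of_nonneg_right hpig hNT.le]

theorem stmt_0_general (p n r : ℕ) (hodd : Odd p) (hr : 1 ≤ r)
    (F : Type) [Field F] [Fintype F] (hF : Fintype.card F = p ^ n)
    (A : Set (Fin r → F)) (hA : ProgressionFree A)
    (α : ℝ) (hα : α = (((p : ℝ) ^ n) ^ r)⁻¹ * A.ncard) :
    ∃ (g : Fin r → F) (V : Submodule F (Fin r → F)),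
      Module.finrank F ((Fin r → F) ⧸ V) = 1 ∧
      ((A ∩ ((g + ·) '' (V : Set (Fin r → F)))).ncard : ℝ) /
          ((V : Set (Fin r → F)).ncard : ℝ) ≥
        (α - (((p : ℝ) ^ n) ^ r)⁻¹) / (1 - α) := by
  classical
  obtain ⟨A, rfl⟩ := A.toFinite.exists_finset_coe
  have : Nonempty (Fin r) := ⟨⟨0, hr⟩⟩
  have h2 : (2 : F) ≠ 0 := FiniteField.two_ne_zero_of_odd_card (hF ▸ hodd.pow)
  obtain ⟨ψ, hψ⟩ := AddChar.exists_ne_one F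
  obtain ⟨u, hu, hspec⟩ := hA.exists_norm_fourierSum_ge h2 hψ
  obtain ⟨t, hpig⟩ := exists_norm_fourierSum_add_card_le hψ A u
  set ℓ := dotProductEquiv F (Fin r) u
  have hℓ : ℓ ≠ 0 := (LinearEquiv.map_ne_zero_iff _).2 hu
  obtain ⟨g, rfl⟩ := LinearMap.surjective_iff_ne_zero.2 hℓ t
  refine ⟨g, LinearMap.ker ℓ, Module.Dual.finrank_quotient_ker hℓ, ?_⟩
  have hfibre : (↑A ∩ (g + ·) '' (LinearMap.ker ℓ : Set (Fin r → F))) =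
      ↑({a ∈ A | u ⬝ᵥ a = ℓ g}) := by
    rw [ℓ.image_add_ker g, coe_filter]
    rfl
  have hN : ((p : ℝ) ^ n) ^ r = Fintype.card (Fin r → F) := by simp [hF]
  rw [hα, hfibre, Set.ncard_coe_finset, Set.ncard_coe_finset,
    ← Nat.card_coe_set_eq (LinearMap.ker ℓ : Set (Fin r → F)), hN, ge_iff_le]
  refine density_increment_inequality (q := Fintype.card F) (by positivity)
    (Nat.cast_pos.2 Nat.card_pos) ?_ ?_ hspec hpig
  · rw [← Nat.card_eq_fintype_card, ← Nat.card_eq_fintype_card]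
    exact_mod_cast Module.Dual.card_eq_card_mul_card_ker hℓ
  · refine Nat.cast_lt.2 ((card_lt_iff_ne_univ A).2 fun h => ?_)
    exact hA.ne_univ (add_self_injective_of_two_ne_zero h2) (by simp [h])

theorem stmt_0 (p n r : ℕ) (hp : p.Prime) (hodd : Odd p) (hn : 0 < n) (hr : 1 ≤ r)
    (F : Type) [Field F] [Fintype F] (hF : Fintype.card F = p ^ n)
    (A : Set (Fin r → F)) (hA : ProgressionFree A)
    (α : ℝ) (hα : α = (((p : ℝ) ^ n) ^ r)⁻¹ * A.ncard) :
    ∃ (g : Fin r → F) (V : Submodule F (Fin r → F)),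
      Module.finrank F ((Fin r → F) ⧸ V) = 1 ∧
      ((A ∩ ((g + ·) '' (V : Set (Fin r → F)))).ncard : ℝ) /
          ((V : Set (Fin r → F)).ncard : ℝ) ≥
        (α - (((p : ℝ) ^ n) ^ r)⁻¹) / (1 - α) :=
  stmt_0_general p n r hodd hr F hF A hA α hα
end

section
/- There exists an absolute constant $C > 0$ such that for every power $q$ of an odd prime, every integer $r \ge 1$, and every progression-free subset $A \subseteq \mathbb{F}_q^r$, the density of $A$ satisfies $q^{-r}|A| \le C/r$. -/
open Finset Module

section ProgressionFree

variable {G H : Type*} [AddCommGroup G] [AddCommGroup H]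

theorem ProgressionFree.mono {A B : Set G} (hA : ProgressionFree A) (hBA : B ⊆ A) :
    ProgressionFree B :=
  fun a ha b hb c hc habc => hA a (hBA ha) b (hBA hb) c (hBA hc) habc

theorem ProgressionFree.preimage_add {A : Set H} (hA : ProgressionFree A) (φ : G →+ H)
    (hφ : Function.Injective φ) (v : H) : ProgressionFree ((fun g => φ g + v) ⁻¹' A) := by
  intro a ha b hb c hc habc
  refine hφ (add_right_cancel (hA _ ha _ hb _ hc ?_))
  rw [add_add_add_comm, ← map_add, habc, map_add, add_add_add_comm]

theorem ProgressionFree.exists_finset_preimage_add {B : Finset H}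
    (hB : ProgressionFree (B : Set H)) (φ : G →+ H) (hφ : Function.Injective φ) (v : H)
    (hBφ : ∀ b ∈ B, b - v ∈ Set.range φ) :
    ∃ B' : Finset G, ProgressionFree (B' : Set G) ∧ #B' = #B := by
  classical
  have hinj : Set.InjOn (fun g => φ g + v) ((fun g => φ g + v) ⁻¹' B) :=
    ((add_left_injective v).comp hφ).injOn
  refine ⟨B.preimage _ hinj, by simpa using hB.preimage_add φ hφ v, ?_⟩
  rw [card_preimage, filter_true_of_mem]
  intro b hb
  obtain ⟨g, hg⟩ := hBφ b hb
  exact ⟨g, by simp [hg]⟩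

theorem ProgressionFree.card_filter_add_eq_add (h2 : ∀ x y : G, x + x = y + y → x = y)
    {A : Finset G} (hA : ProgressionFree (A : Set G)) [DecidableEq G] :
    #{x ∈ A ×ˢ A ×ˢ A | x.1 + x.2.2 = x.2.1 + x.2.1} = #A := by
  have hdiag : {x ∈ A ×ˢ A ×ˢ A | x.1 + x.2.2 = x.2.1 + x.2.1} =
      A.map ⟨fun a => (a, a, a), fun a b h => congrArg Prod.fst h⟩ := by
    ext ⟨a, b, c⟩
    simp only [mem_filter, mem_product, mem_map]
    constructor
    · rintro ⟨⟨ha, hb, hc⟩, h⟩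
      obtain rfl := hA a ha b hb c hc h
      obtain rfl := h2 a b h
      exact ⟨a, ha, rfl⟩
    · rintro ⟨a, ha, ⟨⟩⟩
      exact ⟨⟨ha, ha, ha⟩, rfl⟩
  rw [hdiag, card_map]

end ProgressionFree

theorem exists_sum_abs_le_of_sum_eq_zero {ι : Type*} {s : Finset ι} (hs : s.Nonempty)
    {x : ι → ℝ} (hx : ∑ i ∈ s, x i = 0) : ∃ i ∈ s, ∑ j ∈ s, |x j| ≤ 2 * #s * x i := by
  obtain ⟨i, hi, hmax⟩ := s.exists_max_image x hs
  have hxi : 0 ≤ x i := by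
    have := s.sum_le_card_nsmul x (x i) hmax
    rw [hx, nsmul_eq_mul] at this
    exact nonneg_of_mul_nonneg_right this (by exact_mod_cast hs.card_pos)
  refine ⟨i, hi, ?_⟩
  calc ∑ j ∈ s, |x j| ≤ ∑ j ∈ s, (2 * x i - x j) :=
        sum_le_sum fun j hj => abs_le.2 ⟨by linarith [hmax j hj], by linarith [hmax j hj]⟩
    _ = 2 * #s * x i := by rw [sum_sub_distrib, hx, sum_const, nsmul_eq_mul]; ring

theorem AddChar.exists_le_card_filter_eq {G α : Type*} [AddCommGroup G] [Fintype G]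
    [DecidableEq G] {ψ : AddChar G ℂ} (hψ : ψ ≠ 1) (A : Finset α) (g : α → G) :
    ∃ t, (#A : ℝ) / Fintype.card G + ‖∑ a ∈ A, ψ (g a)‖ / (2 * Fintype.card G) ≤
      #{a ∈ A | g a = t} := by
  set q : ℝ := (Fintype.card G : ℝ)
  have hq : 0 < q := by positivity
  have hsum : ∑ t, ((#{a ∈ A | g a = t} : ℝ) - #A / q) = 0 := by
    rw [sum_sub_distrib, ← Nat.cast_sum, ← card_eq_sum_card_fiberwise fun _ _ => mem_univ _,
      sum_const, card_univ, nsmul_eq_mul]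
    field_simp
    ring
  have hcoeff : ∑ a ∈ A, ψ (g a) = ∑ t, (((#{a ∈ A | g a = t} : ℝ) - #A / q : ℝ) : ℂ) * ψ t := by
    simp only [Complex.ofReal_sub, sub_mul, sum_sub_distrib, ← mul_sum,
      AddChar.sum_eq_zero_of_ne_one hψ, mul_zero, sub_zero]
    rw [← sum_fiberwise_of_maps_to fun a _ => mem_univ (g a)]
    refine sum_congr rfl fun t _ => ?_
    rw [sum_congr rfl fun a ha => by rw [(mem_filter.1 ha).2], sum_const, nsmul_eq_mul]
    push_cast; rfl
  obtain ⟨t, -, ht⟩ := exists_sum_abs_le_of_sum_eq_zero univ_nonempty hsum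
  refine ⟨t, ?_⟩
  have hnorm : ‖∑ a ∈ A, ψ (g a)‖ ≤ ∑ t, |(#{a ∈ A | g a = t} : ℝ) - #A / q| := by
    rw [hcoeff]
    refine (norm_sum_le _ _).trans (le_of_eq (sum_congr rfl fun t _ => ?_))
    rw [norm_mul, AddChar.norm_apply, mul_one, Complex.norm_real, Real.norm_eq_abs]
  rw [card_univ] at ht
  calc (#A : ℝ) / q + ‖∑ a ∈ A, ψ (g a)‖ / (2 * q)
      ≤ #A / q + 2 * q * ((#{a ∈ A | g a = t} : ℝ) - #A / q) / (2 * q) := by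
        gcongr; exact hnorm.trans ht
    _ = #{a ∈ A | g a = t} := by field_simp; ring

noncomputable instance Module.Dual.instFintype {𝔽 V : Type*} [Field 𝔽] [Fintype 𝔽]
    [AddCommGroup V] [Module 𝔽 V] [Finite V] : Fintype (Dual 𝔽 V) :=
  have : Finite (Dual 𝔽 V) := Module.finite_of_finite 𝔽
  Fintype.ofFinite _

section Fourier

variable {𝔽 V : Type*} [Field 𝔽] [Fintype 𝔽] [AddCommGroup V] [Module 𝔽 V] [Fintype V]
  {ψ : AddChar 𝔽 ℂ}

/-- The Fourier coefficient of `A` at the character `x ↦ ψ (f x)` of `V`. -/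
noncomputable def dualFourierCoeff (ψ : AddChar 𝔽 ℂ) (A : Finset V) (f : Dual 𝔽 V) : ℂ :=
  ∑ a ∈ A, ψ (f a)

theorem card_dual : Fintype.card (Dual 𝔽 V) = Fintype.card V :=
  Fintype.card_congr (Module.finBasis 𝔽 V).toDualEquiv.toEquiv.symm

theorem sum_dual_apply_eq_ite (hψ : ψ ≠ 1) [DecidableEq V] (x : V) :
    ∑ f : Dual 𝔽 V, ψ (f x) = if x = 0 then (Fintype.card V : ℂ) else 0 := by
  split_ifs with hx
  · simp [hx, card_dual]
  obtain ⟨t, ht⟩ := AddChar.ne_one_iff.1 hψ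
  obtain ⟨f, hf⟩ : ∃ f : Dual 𝔽 V, f x ≠ 0 := by
    by_contra! h
    exact hx ((Module.forall_dual_apply_eq_zero_iff 𝔽 x).1 h)
  let χ : AddChar (Dual 𝔽 V) ℂ := ψ.compAddMonoidHom (Dual.eval 𝔽 V x).toAddMonoidHom
  refine AddChar.sum_eq_zero_of_ne_one (ψ := χ) (AddChar.ne_one_iff.2 ⟨(t / f x) • f, ?_⟩)
  simpa [χ, hf] using ht

theorem sum_dual_sum_apply (hψ : ψ ≠ 1) {ι : Type*} (s : Finset ι) (g : ι → V) [DecidableEq V] :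
    ∑ f : Dual 𝔽 V, ∑ i ∈ s, ψ (f (g i)) = Fintype.card V * #{i ∈ s | g i = 0} := by
  rw [sum_comm]
  simp_rw [sum_dual_apply_eq_ite hψ, sum_ite, sum_const_zero, add_zero, sum_const, nsmul_eq_mul,
    mul_comm]

theorem sum_norm_dualFourierCoeff_sq (hψ : ψ ≠ 1) (A : Finset V) :
    ∑ f, ‖dualFourierCoeff ψ A f‖ ^ 2 = Fintype.card V * #A := by
  classical
  have hcoeff (f : Dual 𝔽 V) : (‖dualFourierCoeff ψ A f‖ ^ 2 : ℂ) =
      ∑ x ∈ A ×ˢ A, ψ (f (x.1 - x.2)) := by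
    rw [← Complex.mul_conj', dualFourierCoeff, map_sum, sum_mul_sum, sum_product]
    simp only [sub_eq_add_neg, map_add, map_neg, AddChar.map_add_eq_mul, AddChar.map_neg_eq_conj]
  have := sum_dual_sum_apply hψ (A ×ˢ A) fun x => x.1 - x.2
  simp only [sub_eq_zero, ← hcoeff] at this
  rw [← diag_card, diag_eq_filter]
  exact_mod_cast this

theorem sum_dualFourierCoeff_sq_mul (hψ : ψ ≠ 1) (h2 : (2 : 𝔽) ≠ 0) {A : Finset V}
    (hA : ProgressionFree (A : Set V)) :
    ∑ f, dualFourierCoeff ψ A f ^ 2 * dualFourierCoeff ψ A ((-2 : 𝔽) • f) =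
      Fintype.card V * #A := by
  classical
  have hcoeff (f : Dual 𝔽 V) : dualFourierCoeff ψ A f ^ 2 * dualFourierCoeff ψ A ((-2 : 𝔽) • f) =
      ∑ x ∈ A ×ˢ A ×ˢ A, ψ (f (x.1 + x.2.2 - (x.2.1 + x.2.1))) := by
    rw [sq, mul_assoc, mul_comm (dualFourierCoeff ψ A f)]
    simp only [dualFourierCoeff, sum_product, sum_mul, mul_sum, ← AddChar.map_add_eq_mul]
    refine sum_congr rfl fun a _ => sum_congr rfl fun b _ => sum_congr rfl fun c _ => ?_
    simp only [LinearMap.smul_apply, smul_eq_mul, map_sub, map_add]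
    ring_nf
  have := sum_dual_sum_apply hψ (A ×ˢ A ×ˢ A) fun x => x.1 + x.2.2 - (x.2.1 + x.2.1)
  simp only [sub_eq_zero, ← hcoeff] at this
  rwa [hA.card_filter_add_eq_add fun x y h => smul_right_injective V h2 <| by
    simpa only [two_smul] using h] at this

theorem exists_ne_zero_le_norm_dualFourierCoeff [Nontrivial V] (hψ : ψ ≠ 1) (h2 : (2 : 𝔽) ≠ 0)
    {A : Finset V} (hA : ProgressionFree (A : Set V)) :
    ∃ f ≠ 0, (#A : ℝ) ^ 2 / Fintype.card V - 1 ≤ ‖dualFourierCoeff ψ A f‖ := by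
  classical
  set N : ℝ := (Fintype.card V : ℝ)
  set a : ℝ := (#A : ℝ)
  have hN : 0 < N := by positivity
  have : Nontrivial (Dual 𝔽 V) := by
    rw [← Fintype.one_lt_card_iff_nontrivial, card_dual]
    exact Fintype.one_lt_card
  set S := (univ : Finset (Dual 𝔽 V)).erase 0
  obtain ⟨f₀, hf₀, hmax⟩ :=
    S.exists_max_image (‖dualFourierCoeff ψ A ·‖) univ_nontrivial.erase_nonempty
  have hzero : dualFourierCoeff ψ A 0 = (#A : ℂ) := by simp [dualFourierCoeff]
  have hcount : ∑ f ∈ S, dualFourierCoeff ψ A f ^ 2 * dualFourierCoeff ψ A ((-2 : 𝔽) • f) =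
      N * a - a ^ 3 := by
    have := sum_dualFourierCoeff_sq_mul hψ h2 hA
    rw [← add_sum_erase _ _ (mem_univ 0), smul_zero, hzero] at this
    push_cast [N, a] at this ⊢
    linear_combination this
  have hparseval : ∑ f ∈ S, ‖dualFourierCoeff ψ A f‖ ^ 2 = N * a - a ^ 2 := by
    have := sum_norm_dualFourierCoeff_sq hψ A
    rw [← add_sum_erase _ _ (mem_univ 0), hzero, Complex.norm_natCast] at this
    linarith
  have hbound : a ^ 3 - N * a ≤ (N * a - a ^ 2) * ‖dualFourierCoeff ψ A f₀‖ := by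
    calc a ^ 3 - N * a ≤ |N * a - a ^ 3| := by rw [abs_sub_comm]; exact le_abs_self _
      _ = ‖∑ f ∈ S, dualFourierCoeff ψ A f ^ 2 * dualFourierCoeff ψ A ((-2 : 𝔽) • f)‖ := by
          rw [hcount, ← Real.norm_eq_abs, ← Complex.norm_real]; push_cast; rfl
      _ ≤ ∑ f ∈ S, ‖dualFourierCoeff ψ A f‖ ^ 2 * ‖dualFourierCoeff ψ A f₀‖ := by
          refine (norm_sum_le _ _).trans (sum_le_sum fun f hf => ?_)
          rw [norm_mul, norm_pow]
          refine mul_le_mul_of_nonneg_left (hmax _ ?_) (by positivity)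
          exact mem_erase.2 ⟨smul_ne_zero (neg_ne_zero.2 h2) (mem_erase.1 hf).1, mem_univ _⟩
      _ = (N * a - a ^ 2) * ‖dualFourierCoeff ψ A f₀‖ := by rw [← sum_mul, hparseval]
  refine ⟨f₀, (mem_erase.1 hf₀).1, ?_⟩
  rw [div_sub_one hN.ne', div_le_iff₀ hN]
  have hM := norm_nonneg (dualFourierCoeff ψ A f₀)
  rcases (Nat.cast_nonneg #A : (0 : ℝ) ≤ a).eq_or_lt with ha | ha
  · nlinarith
  · nlinarith

theorem ProgressionFree.exists_le_card_filter_eq [Nontrivial V] [DecidableEq 𝔽] {A : Finset V}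
    (hA : ProgressionFree (A : Set V)) (h2 : (2 : 𝔽) ≠ 0) :
    ∃ f : Dual 𝔽 V, f ≠ 0 ∧ ∃ t, (2 * #A * Fintype.card V + #A ^ 2 - Fintype.card V : ℝ) ≤
      2 * Fintype.card 𝔽 * Fintype.card V * #{x ∈ A | f x = t} := by
  obtain ⟨ψ, hψ⟩ := AddChar.exists_apply_ne_zero.2 (one_ne_zero : (1 : 𝔽) ≠ 0)
  replace hψ : ψ ≠ 1 := fun h => hψ (by simp [h])
  obtain ⟨f, hf, hlarge⟩ := exists_ne_zero_le_norm_dualFourierCoeff hψ h2 hA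
  obtain ⟨t, ht⟩ := AddChar.exists_le_card_filter_eq hψ A f
  refine ⟨f, hf, t, ?_⟩
  set a : ℝ := (#A : ℝ)
  set q : ℝ := (Fintype.card 𝔽 : ℝ)
  set N : ℝ := (Fintype.card V : ℝ)
  have hq : 0 < q := by positivity
  have hN : 0 < N := by positivity
  calc 2 * a * N + a ^ 2 - N = 2 * q * N * (a / q + (a ^ 2 / N - 1) / (2 * q)) := by
        field_simp; ring
    _ ≤ 2 * q * N * #{x ∈ A | f x = t} := by gcongr; exact ht.trans' (by gcongr; exact hlarge)

end Fourier

theorem Module.Dual.finrank_ker_add_one {𝔽 V : Type*} [Field 𝔽] [AddCommGroup V] [Module 𝔽 V]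
    [FiniteDimensional 𝔽 V] {f : Dual 𝔽 V} (hf : f ≠ 0) :
    finrank 𝔽 (LinearMap.ker f) + 1 = finrank 𝔽 V := by
  rw [← f.finrank_range_add_finrank_ker, LinearMap.range_eq_top_of_surjective f
    (LinearMap.surjective_of_ne_zero hf), finrank_top, finrank_self, add_comm]

theorem add_three_sq_le_two_pow (k : ℕ) : (k + 3) ^ 2 ≤ 2 ^ (k + 5) := by
  induction k with
  | zero => norm_num
  | succ k ih =>
    have : (k + 1 + 3) ^ 2 ≤ 2 * (k + 3) ^ 2 := by ring_nf; nlinarith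
    rw [show k + 1 + 5 = k + 5 + 1 by ring, pow_succ 2]
    omega

theorem mul_le_of_density_increment {a N s : ℝ} (hs : 3 ≤ s) (hN : s ^ 2 ≤ 16 * N)
    (h : (2 * a * N + a ^ 2 - N) * (s - 1) ≤ 16 * N ^ 2) : a * s ≤ 8 * N := by
  by_contra! hlt
  have hN0 : 0 < N := by nlinarith
  have hat : 16 * N ^ 2 * s ^ 2 ≤ (s - 1) * (16 * N ^ 2 * s + 64 * N ^ 2 - N * s ^ 2) := by
    have : s ^ 2 * (48 * s - 64) ≤ 16 * N * (48 * s - 64) :=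
      mul_le_mul_of_nonneg_right hN (by linarith)
    nlinarith [mul_nonneg (sq_nonneg s) (by linarith : (0 : ℝ) ≤ 2 * s - 3)]
  have habove : (s - 1) * (16 * N ^ 2 * s + 64 * N ^ 2 - N * s ^ 2) <
      (s - 1) * (2 * N * s * (a * s) + (a * s) ^ 2 - N * s ^ 2) := by
    have : 16 * N ^ 2 * s + 64 * N ^ 2 < 2 * N * s * (a * s) + (a * s) ^ 2 := by
      nlinarith [mul_lt_mul_of_pos_left hlt (by positivity : 0 < 2 * N * s),
        pow_lt_pow_left₀ hlt (by positivity) two_ne_zero]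
    exact mul_lt_mul_of_pos_left (by linarith) (by linarith)
  nlinarith [mul_le_mul_of_nonneg_left h (sq_nonneg s)]

theorem ProgressionFree.card_mul_finrank_add_two_le {𝔽 V : Type*} [Field 𝔽] [Fintype 𝔽]
    [AddCommGroup V] [Module 𝔽 V] [Fintype V] (h2 : (2 : 𝔽) ≠ 0) {A : Finset V}
    (hA : ProgressionFree (A : Set V)) :
    (#A : ℝ) * (finrank 𝔽 V + 2) ≤ 8 * Fintype.card V := by
  classical
  induction hm : finrank 𝔽 V generalizing V with
  | zero =>
    have hcard : Fintype.card V = 1 := by rw [Module.card_eq_pow_finrank (K := 𝔽), hm, pow_zero]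
    have : (#A : ℝ) ≤ 1 := by exact_mod_cast hcard ▸ card_le_univ A
    rw [hcard]
    push_cast
    linarith
  | succ m ih =>
    have : Nontrivial V := Module.nontrivial_of_finrank_pos (R := 𝔽) (by omega)
    obtain ⟨f, hf, t, hcoeff⟩ := hA.exists_le_card_filter_eq h2
    obtain ⟨x₀, rfl⟩ := LinearMap.surjective_of_ne_zero hf t
    have hslice := hA.mono (coe_subset.2 (filter_subset (f · = f x₀) A))
    obtain ⟨B, hB, hBcard⟩ := hslice.exists_finset_preimage_add
      (LinearMap.ker f).subtype.toAddMonoidHom Subtype.val_injective x₀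
      fun b hb => ⟨⟨b - x₀, by simp [(mem_filter.1 hb).2]⟩, rfl⟩
    have hker : finrank 𝔽 (LinearMap.ker f) = m := by
      have := Dual.finrank_ker_add_one hf; omega
    have hB := ih hB hker
    rw [hBcard, Module.card_eq_pow_finrank (K := 𝔽), hker] at hB
    set q : ℝ := (Fintype.card 𝔽 : ℝ)
    set N : ℝ := (Fintype.card V : ℝ)
    have hN : N = q * q ^ m := by
      simp only [N, q]; rw [Module.card_eq_pow_finrank (K := 𝔽), hm]; push_cast; ring
    push_cast at hB hcoeff ⊢
    have hsq : ((m : ℝ) + 3) ^ 2 ≤ 16 * N := by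
      have hq : 2 ≤ q := Nat.ofNat_le_cast.2 Fintype.one_lt_card
      calc ((m : ℝ) + 3) ^ 2 ≤ 2 ^ (m + 5) := by exact_mod_cast add_three_sq_le_two_pow m
        _ = 16 * 2 ^ (m + 1) := by ring
        _ ≤ 16 * N := by rw [hN, ← pow_succ']; gcongr
    have := mul_le_of_density_increment (by linarith [m.cast_nonneg (α := ℝ)]) hsq <| by
      calc (2 * #A * N + #A ^ 2 - N) * ((m : ℝ) + 3 - 1)
          ≤ 2 * q * N * #{x ∈ A | f x = f x₀} * ((m : ℝ) + 2) := by
            rw [show (m : ℝ) + 3 - 1 = m + 2 by ring]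
            exact mul_le_mul_of_nonneg_right hcoeff (by positivity)
        _ ≤ 2 * q * N * (8 * q ^ m) := by
            rw [mul_assoc]; exact mul_le_mul_of_nonneg_left hB (by positivity)
        _ = 16 * N ^ 2 := by rw [hN]; ring
    linarith

theorem stmt_2 :
    ∃ C : ℝ, 0 < C ∧
      ∀ (p n r : ℕ), p.Prime → Odd p → 0 < n → 1 ≤ r →
        ∀ (F : Type) [Field F] [Fintype F], Fintype.card F = p ^ n →
          ∀ A : Set (Fin r → F), ProgressionFree A →
            (((p : ℝ) ^ n) ^ r)⁻¹ * A.ncard ≤ C / r := by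
  classical
  refine ⟨8, by norm_num, fun p n r _ hp _ hr F _ _ hF A hA => ?_⟩
  have h2 : (2 : F) ≠ 0 := Ring.two_ne_zero <| by
    rw [Ne, FiniteField.even_card_iff_char_two, hF, Nat.odd_iff.1 hp.pow]
    exact one_ne_zero
  have hcard := ProgressionFree.card_mul_finrank_add_two_le h2 (A := A.toFinset) (by simpa using hA)
  rw [Module.finrank_fin_fun, Fintype.card_fun, Fintype.card_fin, hF,
    ← Set.ncard_eq_toFinset_card'] at hcard
  push_cast at hcard
  have hr' : (1 : ℝ) ≤ r := by exact_mod_cast hr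
  have hp0 : (0 : ℝ) < p := by exact_mod_cast hp.pos
  rw [inv_mul_le_iff₀ (by positivity), mul_div_assoc', le_div_iff₀ (by positivity)]
  nlinarith
end

section
/- Let $q$ be a prime power and $r \ge 1$ an integer. If $f$ is a real-valued function on the vector space $\mathbb{F}_q^r$, then $\|\tilde{f}\|_2^2 = \sum_{V} \|\tilde{f}|V\|_2^2$, where the sum is over all linear subspaces $V < \mathbb{F}_q^r$ of codimension $1$. -/
open scoped BigOperators

/-- `𝔼 f`: the average of a real-valued function over a (finite) type. -/
noncomputable def expect {G : Type*} (f : G → ℝ) : ℝ :=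
  (∑ᶠ g, f g) / Nat.card G

/-- The balanced part `f̃ = f - 𝔼 f` of `f`. -/
noncomputable def balanced {G : Type*} (f : G → ℝ) : G → ℝ :=
  fun g => f g - expect f

/-- `Λ_E[f]` for the linear homogeneous equation `E : c 0 • x 0 + ⋯ + c (k-1) • x (k-1) = 0`:
the average of `f (x 0) ⋯ f (x (k-1))` over the solution set of `E`. -/
noncomputable def lam {G : Type*} [AddCommGroup G] {k : ℕ} (c : Fin k → ℤ) (f : G → ℝ) : ℝ :=
  (∑ᶠ x ∈ {x : Fin k → G | ∑ i, c i • x i = 0}, ∏ i, f (x i)) /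
    Nat.card {x : Fin k → G // ∑ i, c i • x i = 0}

/-- `f|V`: the coset-average of `f`, as a function on the quotient `M ⧸ V`. -/
noncomputable def quotFn {F M : Type*} [Field F] [AddCommGroup M] [Module F M]
    (V : Submodule F M) (f : M → ℝ) : (M ⧸ V) → ℝ :=
  fun x => (∑ᶠ g ∈ {g : M | (Submodule.Quotient.mk g : M ⧸ V) = x}, f g) / Nat.card V

/-- `‖f‖₂² = 𝔼(f²)`. -/
noncomputable def norm2sq {G : Type*} (f : G → ℝ) : ℝ :=
  expect (fun g => f g ^ 2)

/-!
Expanding the square, `‖h|V‖₂² = q / |M|² · ∑ h g h g'` over the pairs with `g - g' ∈ V`, for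
every hyperplane `V` of `M = 𝔽_q^r`. Summed over all hyperplanes, a pair is weighted by the number
of hyperplanes containing `g - g'`. Each hyperplane is the kernel of exactly `q - 1` functionals,
so `q - 1` times that number is the number of nonzero functionals vanishing at `g - g'`:
`|M| - 1` on the diagonal and `|M| / q - 1` off it. For `h = f̃`, which sums to zero, a constant
weight contributes nothing, so only the diagonal excess `|M| - |M| / q` survives, and the total
is `‖f̃‖₂²`.
-/

open Module LinearMap

section DualCounting

variable {F M : Type*} [Field F] [AddCommGroup M] [Module F M] [FiniteDimensional F M]

theorem Module.natCard_dual : Nat.card (Dual F M) = Nat.card M :=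
  (Nat.card_congr (finBasis F M).toDualEquiv.toEquiv).symm

theorem Submodule.natCard_dualAnnihilator (W : Submodule F M) :
    Nat.card W.dualAnnihilator = Nat.card (M ⧸ W) := by
  rw [← Nat.card_congr W.dualQuotEquivDualAnnihilator.toEquiv, natCard_dual]

theorem natCard_dual_apply_eq_zero_mul {d : M} (hd : d ≠ 0) :
    Nat.card {φ : Dual F M // φ d = 0} * Nat.card F = Nat.card M := by
  have hann : {φ : Dual F M // φ d = 0} ≃ (F ∙ d).dualAnnihilator :=
    Equiv.subtypeEquivRight fun φ => by
      rw [← SetLike.mem_coe, Submodule.coe_dualAnnihilator_span]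
      simp
  rw [Nat.card_congr hann, Submodule.natCard_dualAnnihilator,
    (F ∙ d).card_eq_card_quotient_mul_card,
    ← Nat.card_congr (LinearEquiv.toSpanNonzeroSingleton F M d hd).toEquiv, mul_comm]

theorem finrank_quotient_ker_eq_one {φ : Dual F M} (hφ : φ ≠ 0) :
    finrank F (M ⧸ ker φ) = 1 := by
  have h₁ := (ker φ).finrank_quotient_add_finrank
  have h₂ := Dual.finrank_ker_add_one_of_ne_zero hφ
  omega

theorem ker_eq_of_le_ker {V : Submodule F M} (hV : finrank F (M ⧸ V) = 1) {φ : Dual F M}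
    (hφ : φ ≠ 0) (hle : V ≤ ker φ) : ker φ = V := by
  refine (Submodule.eq_of_le_of_finrank_eq hle ?_).symm
  have h₁ := V.finrank_quotient_add_finrank
  have h₂ := Dual.finrank_ker_add_one_of_ne_zero hφ
  omega

variable [Finite F]

theorem natCard_ne_zero_ker_eq {V : Submodule F M} (hV : finrank F (M ⧸ V) = 1) :
    Nat.card {φ : Dual F M // φ ≠ 0 ∧ ker φ = V} = Nat.card F - 1 := by
  have hann : {φ : Dual F M // φ ≠ 0 ∧ ker φ = V} ≃ {ψ : V.dualAnnihilator // ψ ≠ 0} :=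
    { toFun := fun φ => ⟨⟨φ, (Submodule.mem_dualAnnihilator _).2 fun w hw => by
          rw [← φ.2.2] at hw; exact hw⟩, fun h => φ.2.1 (congrArg Subtype.val h)⟩
      invFun := fun ψ => ⟨ψ.1, fun h => ψ.2 (Subtype.ext h), ker_eq_of_le_ker hV
        (fun h => ψ.2 (Subtype.ext h)) fun w hw => (Submodule.mem_dualAnnihilator _).1 ψ.1.2 w hw⟩
      left_inv := fun _ => rfl
      right_inv := fun _ => rfl }
  have hcard : Nat.card V.dualAnnihilator = Nat.card F := by
    rw [V.natCard_dualAnnihilator, natCard_eq_pow_finrank (K := F) (V := M ⧸ V), hV, pow_one]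
  have : Finite V.dualAnnihilator :=
    Nat.finite_of_card_ne_zero (by rw [hcard]; exact Nat.card_pos.ne')
  classical
  let := Fintype.ofFinite V.dualAnnihilator
  rw [Nat.card_congr hann, Nat.card_eq_fintype_card, ← hcard, Nat.card_eq_fintype_card]
  exact Set.card_ne_eq 0

theorem sub_one_mul_natCard_hyperplanes_mem_add_one (d : M) :
    (Nat.card F - 1) * Nat.card {V : Submodule F M // finrank F (M ⧸ V) = 1 ∧ d ∈ V} + 1 =
      Nat.card {φ : Dual F M // φ d = 0} := by
  classical
  have : Finite M := Module.finite_of_finite F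
  have : Finite (Dual F M) := .of_equiv M (finBasis F M).toDualEquiv.toEquiv
  let := Fintype.ofFinite (Dual F M)
  let := Fintype.ofFinite (Submodule F M)
  simp only [Nat.card_eq_fintype_card, Fintype.card_subtype]
  set Φ := ({φ | φ d = 0} : Finset (Dual F M)).erase 0
  set H := ({V | finrank F (M ⧸ V) = 1 ∧ d ∈ V} : Finset (Submodule F M))
  have hmaps : Set.MapsTo (fun φ : Dual F M => ker φ) Φ H := by
    intro φ hφ
    simp only [Φ, Finset.coe_erase, Finset.coe_filter, Finset.mem_univ, true_and] at hφ
    simpa [H] using ⟨finrank_quotient_ker_eq_one hφ.2, hφ.1⟩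
  have hfiber (V) (hV : V ∈ H) : ({φ ∈ Φ | ker φ = V}).card = Nat.card F - 1 := by
    simp only [H, Finset.mem_filter, Finset.mem_univ, true_and] at hV
    rw [← natCard_ne_zero_ker_eq hV.1, Nat.card_eq_fintype_card, Fintype.card_subtype]
    congr 1
    ext φ
    simp only [Φ, Finset.mem_filter, Finset.mem_erase, Finset.mem_univ, true_and]
    constructor
    · exact fun ⟨⟨hφ, _⟩, hker⟩ => ⟨hφ, hker⟩
    · rintro ⟨hφ, rfl⟩
      exact ⟨⟨hφ, hV.2⟩, rfl⟩
  have hΦ : Φ.card + 1 = ({φ | φ d = 0} : Finset (Dual F M)).card :=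
    Finset.card_erase_add_one (by simp)
  rw [← hΦ, Finset.card_eq_sum_card_fiberwise (s := Φ) hmaps, Finset.sum_congr rfl hfiber,
    Finset.sum_const, smul_eq_mul, mul_comm]

end DualCounting

theorem expect_eq_sum_div {G : Type*} [Fintype G] (f : G → ℝ) :
    expect f = (∑ g, f g) / Fintype.card G := by
  rw [expect, finsum_eq_sum_of_fintype, Nat.card_eq_fintype_card]

theorem sum_balanced {G : Type*} [Fintype G] [Nonempty G] (f : G → ℝ) :
    ∑ g, balanced f g = 0 := by
  simp only [balanced, expect_eq_sum_div, Finset.sum_sub_distrib, Finset.sum_const,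
    Finset.card_univ, nsmul_eq_mul]
  field_simp
  ring

theorem sum_sum_ite_mul_mul_of_sum_eq_zero {G : Type*} [Fintype G] [DecidableEq G] {h : G → ℝ}
    (hsum : ∑ g, h g = 0) (a b : ℝ) :
    ∑ g, ∑ g', (if g = g' then a else b) * h g * h g' = (a - b) * ∑ g, h g ^ 2 := by
  have hsplit (g g' : G) : (if g = g' then a else b) * h g * h g' =
      (if g = g' then (a - b) * h g ^ 2 else 0) + b * h g * h g' := by
    split_ifs with hgg <;> [subst hgg; skip] <;> ring
  simp only [hsplit, Finset.sum_add_distrib, Finset.sum_ite_eq, Finset.mem_univ, if_true,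
    ← Finset.mul_sum, hsum, mul_zero, add_zero]

theorem sum_sq_sum_fiberwise {ι κ : Type*} [Fintype ι] [Fintype κ] [DecidableEq κ] (π : ι → κ)
    (h : ι → ℝ) :
    ∑ x, (∑ i with π i = x, h i) ^ 2 = ∑ i, ∑ j, if π i = π j then h i * h j else 0 := by
  calc ∑ x, (∑ i with π i = x, h i) ^ 2
      = ∑ x, ∑ i with π i = x, h i * ∑ j with π i = π j, h j := by
        refine Finset.sum_congr rfl fun x _ => ?_
        rw [sq, Finset.sum_mul]
        refine Finset.sum_congr rfl fun i hi => ?_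
        rw [← (Finset.mem_filter.1 hi).2, Finset.filter_congr fun j _ => eq_comm]
    _ = ∑ i, h i * ∑ j with π i = π j, h j := Finset.sum_fiberwise _ _ _
    _ = ∑ i, ∑ j, if π i = π j then h i * h j else 0 := by
        simp only [Finset.mul_sum, Finset.sum_filter, mul_ite, mul_zero]

section CosetAverages

variable {F M : Type*} [Field F] [AddCommGroup M] [Module F M] [Fintype M]

open Classical in
noncomputable def cosetPairSum (V : Submodule F M) (h : M → ℝ) : ℝ :=
  ∑ g, ∑ g', if g - g' ∈ V then h g * h g' else 0

theorem norm2sq_quotFn (V : Submodule F M) (h : M → ℝ) :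
    norm2sq (quotFn V h) = cosetPairSum V h / (Nat.card V * Nat.card M) := by
  classical
  let _ : DecidableEq (M ⧸ V) := Classical.decEq _
  have hfiber (x : M ⧸ V) :
      quotFn V h x = (∑ g with V.mkQ g = x, h g) / Nat.card V := by
    have hset : {g : M | (Submodule.Quotient.mk g : M ⧸ V) = x} = {g | V.mkQ g = x} := rfl
    rw [quotFn, hset, ← Finset.coe_filter_univ, finsum_mem_coe_finset]
  rw [norm2sq, expect_eq_sum_div]
  simp only [hfiber, div_pow, ← Finset.sum_div]
  rw [sum_sq_sum_fiberwise]
  simp only [Submodule.mkQ_apply, Submodule.Quotient.eq, V.card_eq_card_quotient_mul_card,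
    Nat.card_eq_fintype_card (α := M ⧸ V)]
  rw [cosetPairSum]
  push_cast
  rw [div_div]
  ring

theorem norm2sq_quotFn_of_finrank_quotient_eq_one {V : Submodule F M}
    (hV : finrank F (M ⧸ V) = 1) (h : M → ℝ) :
    norm2sq (quotFn V h) = Nat.card F / Nat.card M ^ 2 * cosetPairSum V h := by
  have hcard : Nat.card M = Nat.card V * Nat.card F := by
    rw [V.card_eq_card_quotient_mul_card, natCard_eq_pow_finrank (K := F) (V := M ⧸ V), hV,
      pow_one]
  rw [norm2sq_quotFn, hcard]
  push_cast
  field_simp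

end CosetAverages

section Hyperplanes

variable {F M : Type*} [Field F] [Finite F] [AddCommGroup M] [Module F M] [Fintype M]

theorem sub_one_mul_natCard_hyperplanes_mem_eq_ite [DecidableEq M] (d : M) :
    ((Nat.card F : ℝ) - 1) * Nat.card {V : Submodule F M // finrank F (M ⧸ V) = 1 ∧ d ∈ V} =
      if d = 0 then (Nat.card M : ℝ) - 1 else Nat.card M / Nat.card F - 1 := by
  have hcount :=
    congrArg (Nat.cast : ℕ → ℝ) (sub_one_mul_natCard_hyperplanes_mem_add_one (F := F) d)
  push_cast [Nat.cast_sub (Nat.one_le_iff_ne_zero.2 Nat.card_pos.ne')] at hcount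
  split_ifs with hd
  · subst hd
    rw [Nat.card_congr (Equiv.subtypeUnivEquiv (p := fun φ : Dual F M => φ 0 = 0) (map_zero ·)),
      natCard_dual] at hcount
    linarith
  · rw [← natCard_dual_apply_eq_zero_mul (F := F) hd, Nat.cast_mul,
      mul_div_cancel_right₀ _ (Nat.cast_ne_zero.2 Nat.card_pos.ne')]
    linarith

theorem finsum_hyperplanes_cosetPairSum {h : M → ℝ} (hsum : ∑ g, h g = 0) :
    ∑ᶠ V ∈ {V : Submodule F M | finrank F (M ⧸ V) = 1}, cosetPairSum V h =
      Nat.card M / Nat.card F * ∑ g, h g ^ 2 := by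
  classical
  let := Fintype.ofFinite (Submodule F M)
  have hq : (1 : ℝ) < Nat.card F := by exact_mod_cast Finite.one_lt_card
  have hindicator (d : M) : ∑ V ∈ {V : Submodule F M | finrank F (M ⧸ V) = 1}.toFinset,
      (if d ∈ V then (1 : ℝ) else 0) =
        Nat.card {V : Submodule F M // finrank F (M ⧸ V) = 1 ∧ d ∈ V} := by
    rw [Finset.sum_boole, Nat.card_eq_fintype_card, Fintype.card_subtype, Set.toFinset_ofPred,
      Finset.filter_filter]
  have hswap : ∑ᶠ V ∈ {V : Submodule F M | finrank F (M ⧸ V) = 1}, cosetPairSum V h =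
      ∑ g, ∑ g', Nat.card {V : Submodule F M // finrank F (M ⧸ V) = 1 ∧ g - g' ∈ V} *
        (h g * h g') := by
    simp only [finsum_mem_eq_toFinset_sum, cosetPairSum, ← hindicator, Finset.sum_mul, ite_mul,
      one_mul, zero_mul]
    rw [Finset.sum_comm]
    exact Finset.sum_congr rfl fun _ _ => Finset.sum_comm
  have hmul : ((Nat.card F : ℝ) - 1) * ∑ᶠ V ∈ {V : Submodule F M | finrank F (M ⧸ V) = 1},
      cosetPairSum V h = ((Nat.card F : ℝ) - 1) * (Nat.card M / Nat.card F * ∑ g, h g ^ 2) := by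
    calc ((Nat.card F : ℝ) - 1) * ∑ᶠ V ∈ {V : Submodule F M | finrank F (M ⧸ V) = 1},
          cosetPairSum V h
        = ∑ g, ∑ g', ((Nat.card F : ℝ) - 1) *
            Nat.card {V : Submodule F M // finrank F (M ⧸ V) = 1 ∧ g - g' ∈ V} * h g * h g' := by
          simp only [hswap, Finset.mul_sum, mul_assoc]
      _ = ∑ g, ∑ g', (if g = g' then (Nat.card M : ℝ) - 1 else Nat.card M / Nat.card F - 1) *
            h g * h g' := by
          simp only [sub_one_mul_natCard_hyperplanes_mem_eq_ite, sub_eq_zero]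
      _ = ((Nat.card F : ℝ) - 1) * (Nat.card M / Nat.card F * ∑ g, h g ^ 2) := by
          rw [sum_sum_ite_mul_mul_of_sum_eq_zero hsum]
          field_simp
          ring
  exact mul_left_cancel₀ (sub_ne_zero.2 hq.ne') hmul

theorem norm2sq_eq_finsum_hyperplanes {h : M → ℝ} (hsum : ∑ g, h g = 0) :
    norm2sq h = ∑ᶠ V ∈ {V : Submodule F M | finrank F (M ⧸ V) = 1}, norm2sq (quotFn V h) := by
  have hquot : ∀ V ∈ {V : Submodule F M | finrank F (M ⧸ V) = 1},
      norm2sq (quotFn V h) = Nat.card F / Nat.card M ^ 2 * cosetPairSum V h :=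
    fun V hV => norm2sq_quotFn_of_finrank_quotient_eq_one hV h
  rw [finsum_mem_congr rfl hquot, ← mul_finsum_mem, finsum_hyperplanes_cosetPairSum hsum, norm2sq,
    expect_eq_sum_div, Nat.card_eq_fintype_card (α := M)]
  have : (0 : ℝ) < Nat.card F := by exact_mod_cast Nat.card_pos
  field_simp

end Hyperplanes

theorem stmt_6_general (r : ℕ) (F : Type) [Field F] [Fintype F] (f : (Fin r → F) → ℝ) :
    norm2sq (balanced f) =
      ∑ᶠ V ∈ {V : Submodule F (Fin r → F) | Module.finrank F ((Fin r → F) ⧸ V) = 1},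
        norm2sq (quotFn V (balanced f)) :=
  norm2sq_eq_finsum_hyperplanes (sum_balanced f)

theorem stmt_6 (p n r : ℕ) (hp : p.Prime) (hn : 0 < n) (hr : 1 ≤ r)
    (F : Type) [Field F] [Fintype F] (hF : Fintype.card F = p ^ n)
    (f : (Fin r → F) → ℝ) :
    norm2sq (balanced f) =
      ∑ᶠ V ∈ {V : Submodule F (Fin r → F) | Module.finrank F ((Fin r → F) ⧸ V) = 1},
        norm2sq (quotFn V (balanced f)) :=
  stmt_6_general r F f
end
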